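/- For b ∈ ℝ^N, one has b ∈ interior(C_A) if and only if dim Q_{A,b} = d and dim Q^k_{A,b} = d − 1 for every k ∈ {1,…,N}, where Q^k_{A,b} := Q_{A,b} ∩ {x ∈ ℝ^d : a_kᵀx = b_k}. -/

import Mathlib

/-!
If `b` is interior to `C_A`, then lowering all right-hand sides (resp. all but the `k`-th) keeps
`b` in `C_A`; a point of the lowered polyhedron has a ball (resp. a ball of the hyperplane
`a_kᵀx = b_k`) around it inside `Q_{A,b}` (resp. `Q^k_{A,b}`), which gives the dimensions.

Conversely, if `Q^k_{A,b}` had dimension `d - 1` while `a_iᵀx = b_i` on all of it for some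
`i ≠ k`, then `a_i = ± a_k`; `a_i = a_k` is excluded by distinctness, and `a_i = -a_k` would
squeeze `Q_{A,b}` into the hyperplane `a_kᵀx = b_k`. So for each `i ≠ k` the facet has a point
with `a_iᵀx < b_i`, and by convexity one point that is strict for all `i ≠ k` at once; moving
it along `a_k` by `b'_k - b_k` stays a witness for every `b'` near `b`.
-/

open scoped RealInnerProductSpace

noncomputable section

/-- `Q_{A,b} = {x ∈ ℝ^d : a_iᵀx ≤ b_i for all i}`. -/
def Qset {d N : ℕ} (a : Fin N → EuclideanSpace ℝ (Fin d)) (b : Fin N → ℝ) :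
    Set (EuclideanSpace ℝ (Fin d)) :=
  {x | ∀ i, ⟪a i, x⟫ ≤ b i}

/-- `C_A = {b : for every i there is x ∈ Q_{A,b} with a_iᵀx = b_i}`. -/
def CA {d N : ℕ} (a : Fin N → EuclideanSpace ℝ (Fin d)) : Set (Fin N → ℝ) :=
  {b | ∀ i, ∃ x ∈ Qset a b, ⟪a i, x⟫ = b i}

/-- The facet `Q^k_{A,b} = Q_{A,b} ∩ {x : a_kᵀx = b_k}`. -/
def Qfacet {d N : ℕ} (a : Fin N → EuclideanSpace ℝ (Fin d)) (b : Fin N → ℝ) (k : Fin N) :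
    Set (EuclideanSpace ℝ (Fin d)) :=
  Qset a b ∩ {x | ⟪a k, x⟫ = b k}

/-- The dimension of a convex subset of `ℝ^d`: the dimension of (the direction of)
its affine hull. -/
def convDim {d : ℕ} (S : Set (EuclideanSpace ℝ (Fin d))) : ℕ :=
  Module.finrank ℝ (affineSpan ℝ S).direction

open Module Filter Topology

section InnerProductSpace

variable {E : Type*} [NormedAddCommGroup E] [InnerProductSpace ℝ E]

theorem vectorSpan_le_orthogonal_span_singleton {s : Set E} {u : E} {c : ℝ}
    (h : ∀ x ∈ s, ⟪u, x⟫ = c) : vectorSpan ℝ s ≤ (ℝ ∙ u)ᗮ := by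
  rw [vectorSpan_def, Submodule.span_le]
  rintro _ ⟨x, hx, y, hy, rfl⟩
  simp only [SetLike.mem_coe, Submodule.mem_orthogonal_singleton_iff_inner_right, vsub_eq_sub,
    inner_sub_right, h x hx, h y hy, sub_self]

theorem le_vectorSpan_of_forall_add_mem {s : Set E} {W : Submodule ℝ E} {y : E} {ε : ℝ}
    (hε : 0 < ε) (h : ∀ v ∈ W, ‖v‖ ≤ ε → y + v ∈ s) : W ≤ vectorSpan ℝ s := by
  intro w hw
  rcases eq_or_ne w 0 with rfl | hw0
  · exact zero_mem _
  have hw_pos : 0 < ‖w‖ := norm_pos_iff.2 hw0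
  have hy : y ∈ s := by simpa using h 0 W.zero_mem (by simpa using hε.le)
  have hscaled : (ε / ‖w‖) • w ∈ vectorSpan ℝ s := by
    have hnorm : ‖(ε / ‖w‖) • w‖ ≤ ε := by
      rw [norm_smul, Real.norm_of_nonneg (by positivity), div_mul_cancel₀ _ hw_pos.ne']
    simpa using vsub_mem_vectorSpan ℝ (h _ (W.smul_mem _ hw) hnorm) hy
  have hw_eq : w = (‖w‖ / ε) • (ε / ‖w‖) • w := by
    rw [smul_smul, div_mul_div_cancel₀ hε.ne', div_self hw_pos.ne', one_smul]
  rw [hw_eq]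
  exact Submodule.smul_mem _ _ hscaled

theorem real_inner_add_le_of_norm_le {u x v : E} {t : ℝ} (hu : ‖u‖ = 1) (hv : ‖v‖ ≤ t) :
    ⟪u, x + v⟫ ≤ ⟪u, x⟫ + t := by
  have : ⟪u, v⟫ ≤ t := (real_inner_le_norm u v).trans (by rwa [hu, one_mul])
  rw [inner_add_right]
  linarith

theorem eq_or_eq_neg_of_mem_span_singleton {u v : E} (hu : ‖u‖ = 1) (hv : ‖v‖ = 1)
    (h : v ∈ ℝ ∙ u) : v = u ∨ v = -u := by
  obtain ⟨c, rfl⟩ := Submodule.mem_span_singleton.1 h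
  rw [norm_smul, hu, mul_one, Real.norm_eq_abs] at hv
  rcases abs_eq zero_le_one |>.1 hv with rfl | rfl
  · exact Or.inl (one_smul ℝ u)
  · exact Or.inr (neg_one_smul ℝ u)

theorem Convex.exists_forall_inner_lt {ι : Type*} [Finite ι] {S : Set E} (hS : Convex ℝ S)
    (hne : S.Nonempty) {u : ι → E} {c : ι → ℝ} (hle : ∀ x ∈ S, ∀ i, ⟪u i, x⟫ ≤ c i)
    (hlt : ∀ i, ∃ x ∈ S, ⟪u i, x⟫ < c i) : ∃ x ∈ S, ∀ i, ⟪u i, x⟫ < c i := by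
  classical
  have := Fintype.ofFinite ι
  suffices ∀ T : Finset ι, ∃ x ∈ S, ∀ i ∈ T, ⟪u i, x⟫ < c i by
    simpa using this Finset.univ
  intro T
  induction T using Finset.induction_on with
  | empty =>
    obtain ⟨x, hx⟩ := hne
    exact ⟨x, hx, by simp⟩
  | insert j T _ ih =>
    obtain ⟨x, hxS, hx⟩ := ih
    obtain ⟨y, hyS, hy⟩ := hlt j
    refine ⟨(1 / 2 : ℝ) • x + (1 / 2 : ℝ) • y,
      hS hxS hyS (by norm_num) (by norm_num) (by norm_num), ?_⟩
    intro i hi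
    rw [inner_add_right, real_inner_smul_right, real_inner_smul_right]
    rcases Finset.mem_insert.1 hi with rfl | hiT
    · linarith [hle x hxS i]
    · linarith [hx i hiT, hle y hyS i]

theorem mem_span_singleton_of_vectorSpan_eq {s : Set E} {u v : E} {c : ℝ}
    (hs : vectorSpan ℝ s = (ℝ ∙ u)ᗮ) (h : ∀ x ∈ s, ⟪v, x⟫ = c) : v ∈ ℝ ∙ u := by
  have hle := Submodule.orthogonal_le (hs ▸ vectorSpan_le_orthogonal_span_singleton h)
  rw [Submodule.orthogonal_orthogonal, Submodule.orthogonal_orthogonal] at hle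
  exact hle (Submodule.mem_span_singleton_self v)

variable [FiniteDimensional ℝ E]

theorem finrank_orthogonal_span_singleton_eq_sub_one {u : E} (hu : u ≠ 0) :
    finrank ℝ (ℝ ∙ u)ᗮ = finrank ℝ E - 1 := by
  have := Submodule.finrank_add_finrank_orthogonal (ℝ ∙ u)
  rw [finrank_span_singleton hu] at this
  omega

theorem finrank_vectorSpan_lt_of_forall_inner_eq {s : Set E} {u : E} {c : ℝ} (hu : u ≠ 0)
    (h : ∀ x ∈ s, ⟪u, x⟫ = c) : finrank ℝ (vectorSpan ℝ s) < finrank ℝ E := by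
  have hle := Submodule.finrank_mono (vectorSpan_le_orthogonal_span_singleton h)
  have hpos : 0 < finrank ℝ E := Module.finrank_pos_iff_exists_ne_zero.2 ⟨u, hu⟩
  rw [finrank_orthogonal_span_singleton_eq_sub_one hu] at hle
  omega

end InnerProductSpace

section Polyhedron

variable {d N : ℕ} {a : Fin N → EuclideanSpace ℝ (Fin d)} {b : Fin N → ℝ}

theorem convDim_eq_finrank_vectorSpan (s : Set (EuclideanSpace ℝ (Fin d))) :
    convDim s = finrank ℝ (vectorSpan ℝ s) := by
  rw [convDim, direction_affineSpan]

theorem convex_Qset : Convex ℝ (Qset a b) := by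
  have : Qset a b = ⋂ i, {x | ⟪a i, x⟫ ≤ b i} := by ext; simp [Qset]
  rw [this]
  exact convex_iInter fun i => convex_halfSpace_le (innerₛₗ ℝ (a i)).isLinear _

theorem convex_Qfacet (k : Fin N) : Convex ℝ (Qfacet a b k) :=
  convex_Qset.inter (convex_hyperplane (innerₛₗ ℝ (a k)).isLinear _)

theorem Qset_nonempty_of_mem_CA (hb : b ∈ CA a) : (Qset a b).Nonempty := by
  cases isEmpty_or_nonempty (Fin N) with
  | inl _ => exact ⟨0, fun i => isEmptyElim i⟩
  | inr _ =>
    obtain ⟨x, hx, -⟩ := hb (Classical.arbitrary _)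
    exact ⟨x, hx⟩

theorem exists_pos_sub_smul_mem_CA (hb : b ∈ interior (CA a)) (e : Fin N → ℝ) :
    ∃ t : ℝ, 0 < t ∧ b - t • e ∈ CA a := by
  have hlim : Tendsto (fun t : ℝ => b - t • e) (𝓝[>] 0) (𝓝 b) := by
    have : Continuous fun t : ℝ => b - t • e := by fun_prop
    simpa using (this.tendsto 0).mono_left nhdsWithin_le_nhds
  obtain ⟨t, hmem, hpos⟩ :=
    ((hlim.eventually (mem_interior_iff_mem_nhds.1 hb)).and self_mem_nhdsWithin).exists
  exact ⟨t, hpos, hmem⟩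

theorem convDim_Qset_of_mem_interior_CA (ha_norm : ∀ i, ‖a i‖ = 1) (hb : b ∈ interior (CA a)) :
    (Qset a b).Nonempty ∧ convDim (Qset a b) = d := by
  obtain ⟨t, ht, hmem⟩ := exists_pos_sub_smul_mem_CA hb 1
  obtain ⟨x, hx⟩ := Qset_nonempty_of_mem_CA hmem
  have hball : ∀ v, ‖v‖ ≤ t → x + v ∈ Qset a b := fun v hv i => by
    have := hx i
    simp only [Pi.sub_apply, Pi.smul_apply, Pi.one_apply, smul_eq_mul, mul_one] at this
    linarith [real_inner_add_le_of_norm_le (x := x) (ha_norm i) hv]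
  have hspan : vectorSpan ℝ (Qset a b) = ⊤ :=
    eq_top_iff.2 (le_vectorSpan_of_forall_add_mem ht fun v _ => hball v)
  refine ⟨⟨x, by simpa using hball 0 (by simpa using ht.le)⟩, ?_⟩
  rw [convDim_eq_finrank_vectorSpan, hspan, finrank_top, finrank_euclideanSpace_fin]

theorem convDim_Qfacet_of_mem_interior_CA (ha_norm : ∀ i, ‖a i‖ = 1)
    (hb : b ∈ interior (CA a)) (k : Fin N) :
    (Qfacet a b k).Nonempty ∧ convDim (Qfacet a b k) = d - 1 := by
  classical
  obtain ⟨t, ht, hmem⟩ := exists_pos_sub_smul_mem_CA hb fun i => if i = k then 0 else 1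
  obtain ⟨y, hy, hyk⟩ := hmem k
  rw [Pi.sub_apply, Pi.smul_apply, if_pos rfl, smul_zero, sub_zero] at hyk
  have hball : ∀ v ∈ (ℝ ∙ a k)ᗮ, ‖v‖ ≤ t → y + v ∈ Qfacet a b k := by
    intro v hv hvt
    have hvk : ⟪a k, v⟫ = 0 := Submodule.mem_orthogonal_singleton_iff_inner_right.1 hv
    refine ⟨fun i => ?_, by simp [inner_add_right, hyk, hvk]⟩
    by_cases hik : i = k
    · subst hik
      simp [inner_add_right, hyk, hvk]
    · have := hy i
      simp only [Pi.sub_apply, Pi.smul_apply, smul_eq_mul, if_neg hik, mul_one] at this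
      linarith [real_inner_add_le_of_norm_le (x := y) (ha_norm i) hvt]
  have hspan : vectorSpan ℝ (Qfacet a b k) = (ℝ ∙ a k)ᗮ :=
    le_antisymm (vectorSpan_le_orthogonal_span_singleton fun x hx => hx.2)
      (le_vectorSpan_of_forall_add_mem ht hball)
  refine ⟨⟨y, by simpa using hball 0 (zero_mem _) (by simpa using ht.le)⟩, ?_⟩
  rw [convDim_eq_finrank_vectorSpan, hspan,
    finrank_orthogonal_span_singleton_eq_sub_one (norm_ne_zero_iff.1 (by simp [ha_norm])),
    finrank_euclideanSpace_fin]

theorem exists_mem_Qfacet_inner_lt (ha_inj : Function.Injective a)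
    (ha_norm : ∀ i, ‖a i‖ = 1) (hQ : convDim (Qset a b) = d) {k : Fin N}
    (hk : (Qfacet a b k).Nonempty) (hk_dim : convDim (Qfacet a b k) = d - 1) {i : Fin N}
    (hik : i ≠ k) : ∃ x ∈ Qfacet a b k, ⟪a i, x⟫ < b i := by
  by_contra! hge
  have hi_eq : ∀ x ∈ Qfacet a b k, ⟪a i, x⟫ = b i := fun x hx => le_antisymm (hx.1 i) (hge x hx)
  have hak : a k ≠ 0 := norm_ne_zero_iff.1 (by simp [ha_norm])
  have hspan : vectorSpan ℝ (Qfacet a b k) = (ℝ ∙ a k)ᗮ := by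
    refine Submodule.eq_of_le_of_finrank_eq
      (vectorSpan_le_orthogonal_span_singleton fun x hx => hx.2) ?_
    rw [← convDim_eq_finrank_vectorSpan, hk_dim, finrank_orthogonal_span_singleton_eq_sub_one hak,
      finrank_euclideanSpace_fin]
  rcases eq_or_eq_neg_of_mem_span_singleton (ha_norm k) (ha_norm i)
    (mem_span_singleton_of_vectorSpan_eq hspan hi_eq) with h | h
  · exact hik (ha_inj h)
  · obtain ⟨x₀, hx₀⟩ := hk
    have hbi : b i = -b k := by rw [← hi_eq x₀ hx₀, h, inner_neg_left, hx₀.2]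
    have hQk : ∀ x ∈ Qset a b, ⟪a k, x⟫ = b k := fun x hx => by
      have := hx i
      rw [h, inner_neg_left, hbi] at this
      linarith [hx k]
    have := finrank_vectorSpan_lt_of_forall_inner_eq hak hQk
    rw [← convDim_eq_finrank_vectorSpan, hQ, finrank_euclideanSpace_fin] at this
    exact lt_irrefl _ this

theorem exists_mem_Qfacet_forall_inner_lt (ha_inj : Function.Injective a)
    (ha_norm : ∀ i, ‖a i‖ = 1) (hQ : convDim (Qset a b) = d) {k : Fin N}
    (hk : (Qfacet a b k).Nonempty) (hk_dim : convDim (Qfacet a b k) = d - 1) :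
    ∃ x ∈ Qfacet a b k, ∀ i, i ≠ k → ⟪a i, x⟫ < b i := by
  obtain ⟨x, hx, hlt⟩ := (convex_Qfacet k).exists_forall_inner_lt (ι := {i // i ≠ k}) hk
    (u := fun i => a i) (c := fun i => b i) (fun x hx i => hx.1 i)
    (fun i => exists_mem_Qfacet_inner_lt ha_inj ha_norm hQ hk hk_dim i.2)
  exact ⟨x, hx, fun i hi => hlt ⟨i, hi⟩⟩

theorem mem_interior_CA_of_forall_exists_inner_lt (ha_norm : ∀ i, ‖a i‖ = 1)
    (h : ∀ k, ∃ x ∈ Qfacet a b k, ∀ i, i ≠ k → ⟪a i, x⟫ < b i) : b ∈ interior (CA a) := by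
  choose x hx hlt using h
  have hnear : ∀ k i, ∀ᶠ b' in 𝓝 b, i ≠ k → ⟪a i, x k⟫ + (b' k - b k) * ⟪a i, a k⟫ < b' i :=
    fun k i => eventually_imp_distrib_left.2 fun hik =>
      ContinuousAt.eventually_lt (Continuous.continuousAt (by fun_prop))
        (continuous_apply i).continuousAt (by simpa using hlt k i hik)
  have hkk : ∀ k, ⟪a k, a k⟫ = 1 := fun k => by
    rw [real_inner_self_eq_norm_sq, ha_norm, one_pow]
  rw [mem_interior_iff_mem_nhds]
  filter_upwards [eventually_all.2 fun k => eventually_all.2 (hnear k)] with b' hb' k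
  refine ⟨x k + (b' k - b k) • a k, fun i => ?_, ?_⟩
  · rw [inner_add_right, real_inner_smul_right]
    rcases eq_or_ne i k with rfl | hik
    · rw [hkk, (hx i).2]
      linarith
    · exact (hb' k i hik).le
  · rw [inner_add_right, real_inner_smul_right, hkk, (hx k).2]
    ring

end Polyhedron

theorem stmt_16_general (d N : ℕ)
    (a : Fin N → EuclideanSpace ℝ (Fin d))
    (ha_inj : Function.Injective a) (ha_norm : ∀ i, ‖a i‖ = 1)
    (b : Fin N → ℝ) :
    b ∈ interior (CA a) ↔
      ((Qset a b).Nonempty ∧ convDim (Qset a b) = d) ∧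
      (∀ k : Fin N, (Qfacet a b k).Nonempty ∧ convDim (Qfacet a b k) = d - 1) := by
  constructor
  · intro hb
    exact ⟨convDim_Qset_of_mem_interior_CA ha_norm hb,
      fun k => convDim_Qfacet_of_mem_interior_CA ha_norm hb k⟩
  · rintro ⟨⟨-, hQ⟩, hF⟩
    exact mem_interior_CA_of_forall_exists_inner_lt ha_norm fun k =>
      exists_mem_Qfacet_forall_inner_lt ha_inj ha_norm hQ (hF k).1 (hF k).2

theorem stmt_16 (d N : ℕ) (hd : 1 ≤ d) (hN : 1 ≤ N)
    (a : Fin N → EuclideanSpace ℝ (Fin d))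
    (ha_inj : Function.Injective a) (ha_norm : ∀ i, ‖a i‖ = 1)
    (b : Fin N → ℝ) :
    b ∈ interior (CA a) ↔
      ((Qset a b).Nonempty ∧ convDim (Qset a b) = d) ∧
      (∀ k : Fin N, (Qfacet a b k).Nonempty ∧ convDim (Qfacet a b k) = d - 1) :=
  stmt_16_general d N a ha_inj ha_norm b
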